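/- Let A be a strictly positive operator on H and T ∈ B_A(H) with T³ = 0. Then w_A(T)³ = (1/4)·w_A(T²T^{♯A} + T^{♯A}T² + TT^{♯A}T). -/

import Mathlib

noncomputable section
open Complex ContinuousLinearMap

variable {H : Type*} [NormedAddCommGroup H] [InnerProductSpace ℂ H] [CompleteSpace H]

/-- The `A`-inner product `⟨x,y⟩_A = ⟨Ax,y⟩`. -/
def innA (A : H →L[ℂ] H) (x y : H) : ℂ := inner ℂ (A x) y

/-- The `A`-seminorm of a vector, `‖x‖_A = √⟨x,x⟩_A`. -/
def vnormA (A : H →L[ℂ] H) (x : H) : ℝ := Real.sqrt (innA A x x).re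

/-- The `A`-numerical radius `w_A(T) = sup{|⟨Tx,x⟩_A| : ‖x‖_A = 1}`. -/
def wA (A T : H →L[ℂ] H) : ℝ :=
  sSup {r : ℝ | ∃ x : H, vnormA A x = 1 ∧ r = ‖innA A (T x) x‖}

/-- The `A`-operator seminorm, `sup` over `A`-unit vectors in the closure of the range of `A`. -/
def opNormA (A T : H →L[ℂ] H) : ℝ :=
  sSup {r : ℝ | ∃ x : H, x ∈ closure (Set.range A) ∧ vnormA A x = 1 ∧ r = vnormA A (T x)}

/-- The `A`-operator seminorm, `sup` over all `A`-unit vectors (used when `A > 0`). -/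
def opNormA' (A T : H →L[ℂ] H) : ℝ :=
  sSup {r : ℝ | ∃ x : H, vnormA A x = 1 ∧ r = vnormA A (T x)}

/-- The `A`-Crawford number `c_A(T) = inf{|⟨Tx,x⟩_A| : ‖x‖_A = 1}`. -/
def cA (A T : H →L[ℂ] H) : ℝ :=
  sInf {r : ℝ | ∃ x : H, vnormA A x = 1 ∧ r = ‖innA A (T x) x‖}

/-- The `A`-minimum modulus `m_A(T) = inf{‖Tx‖_A : ‖x‖_A = 1}` (version for `A > 0`). -/
def mA (A T : H →L[ℂ] H) : ℝ :=
  sInf {r : ℝ | ∃ x : H, vnormA A x = 1 ∧ r = vnormA A (T x)}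

/-- `S` is an `A`-adjoint of `T`, i.e. `A S = T* A`. -/
def IsAAdjoint (A T S : H →L[ℂ] H) : Prop :=
  A.comp S = (ContinuousLinearMap.adjoint T).comp A

/-- `A` is strictly positive: positive and `⟨Ax,x⟩ > 0` for all `x ≠ 0`. -/
def StrictPos (A : H →L[ℂ] H) : Prop :=
  A.IsPositive ∧ ∀ x : H, x ≠ 0 → 0 < (innA A x x).re

/-- The inner product on `H ⊕ H`. -/
def inn2 (u v : H × H) : ℂ := inner ℂ u.1 v.1 + inner ℂ u.2 v.2

/-- `B = diag(A, A)` acting on `H ⊕ H`. -/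
def Bop (A : H →L[ℂ] H) : H × H →L[ℂ] H × H := A.prodMap A

/-- The `B`-seminorm on `H ⊕ H`. -/
def vnormB (A : H →L[ℂ] H) (u : H × H) : ℝ := Real.sqrt (inn2 (Bop A u) u).re

/-- The `B`-numerical radius on `H ⊕ H`, where `B = diag(A, A)`. -/
def wB (A : H →L[ℂ] H) (S : H × H →L[ℂ] H × H) : ℝ :=
  sSup {r : ℝ | ∃ u : H × H, vnormB A u = 1 ∧ r = ‖inn2 (Bop A (S u)) u‖}

/-- The `2 × 2` operator matrix `[[X, Y], [Z, W]]` acting on `H ⊕ H`. -/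
def blk (X Y Z W : H →L[ℂ] H) : H × H →L[ℂ] H × H :=
  ((X.comp (ContinuousLinearMap.fst ℂ H H)) + (Y.comp (ContinuousLinearMap.snd ℂ H H))).prod
    ((Z.comp (ContinuousLinearMap.fst ℂ H H)) + (W.comp (ContinuousLinearMap.snd ℂ H H)))

/-!
For `V` with `A`-adjoint `W` and `|c| = 1`, the operator `R = c V + c̄ W` is `A`-selfadjoint and
`⟨R x, x⟩_A = 2 Re (c̄ ⟨V x, x⟩_A)`; hence `w_A(R) ≤ 2 w_A(V)`, and at any given `x` a suitable
`c` makes `|⟨R x, x⟩_A| = 2 |⟨V x, x⟩_A|`. For `A`-selfadjoint `R`, `w_A(R)` equals the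
`A`-operator seminorm (finite by a power trick), so `w_A(R³) = w_A(R)³`. If `T³ = 0` then also
`(T^♯)³ = 0`, and `R³ = c P + c̄ P^♯` with `P = T² T^♯ + T^♯ T² + T T^♯ T`. Comparing `V = T` with
`V = P` through `R³` gives both inequalities between `4 w_A(T)³` and `w_A(P)`.
-/

open ComplexConjugate

set_option linter.unusedSectionVars false

variable {A V W : H →L[ℂ] H}

section InnerA

lemma innA_add_left (x y z : H) : innA A (x + y) z = innA A x z + innA A y z := by
  simp [innA]

lemma innA_add_right (x y z : H) : innA A x (y + z) = innA A x y + innA A x z := by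
  simp [innA]

lemma innA_sub_left (x y z : H) : innA A (x - y) z = innA A x z - innA A y z := by
  simp [innA]

lemma innA_sub_right (x y z : H) : innA A x (y - z) = innA A x y - innA A x z := by
  simp [innA]

lemma innA_smul_left (c : ℂ) (x y : H) : innA A (c • x) y = conj c * innA A x y := by
  simp [innA, mul_comm]

lemma innA_smul_right (c : ℂ) (x y : H) : innA A x (c • y) = c * innA A x y := by
  simp [innA]

lemma innA_conj (hA : IsSelfAdjoint A) (x y : H) : conj (innA A x y) = innA A y x := by
  rw [innA, innA, inner_conj_symm]
  exact (hA.isSymmetric y x).symm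

lemma norm_innA_le (hA : A.IsPositive) (x y : H) : ‖innA A x y‖ ≤ vnormA A x * vnormA A y :=
  letI : PreInnerProductSpace.Core ℂ H :=
    { inner := innA A
      conj_inner_symm := fun x y => innA_conj hA.isSelfAdjoint y x
      re_inner_nonneg := hA.re_inner_nonneg_left
      add_left := innA_add_left
      smul_left := fun x y c => innA_smul_left c x y }
  @InnerProductSpace.Core.norm_inner_le_norm ℂ H _ _ _ this x y

lemma vnormA_nonneg (x : H) : 0 ≤ vnormA A x := Real.sqrt_nonneg _

lemma vnormA_sq (hA : A.IsPositive) (x : H) : vnormA A x ^ 2 = (innA A x x).re :=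
  Real.sq_sqrt (hA.re_inner_nonneg_left x)

lemma vnormA_smul (c : ℂ) (x : H) : vnormA A (c • x) = ‖c‖ * vnormA A x := by
  rw [vnormA, vnormA, innA_smul_left, innA_smul_right, ← mul_assoc,
    ← Complex.normSq_eq_conj_mul_self, Complex.re_ofReal_mul,
    Real.sqrt_mul (Complex.normSq_nonneg c), ← Complex.norm_def]

lemma vnormA_le (x : H) : vnormA A x ≤ √‖A‖ * ‖x‖ := by
  have h : (innA A x x).re ≤ ‖A‖ * ‖x‖ ^ 2 :=
    calc (innA A x x).re ≤ ‖A x‖ * ‖x‖ :=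
        (Complex.re_le_norm _).trans (norm_inner_le_norm _ _)
      _ ≤ ‖A‖ * ‖x‖ * ‖x‖ := by gcongr; exact A.le_opNorm x
      _ = ‖A‖ * ‖x‖ ^ 2 := by ring
  calc vnormA A x ≤ √(‖A‖ * ‖x‖ ^ 2) := Real.sqrt_le_sqrt h
    _ = √‖A‖ * ‖x‖ := by rw [Real.sqrt_mul (norm_nonneg A), Real.sqrt_sq (norm_nonneg x)]

lemma vnormA_parallelogram (hA : A.IsPositive) (x y : H) :
    vnormA A (x + y) ^ 2 + vnormA A (x - y) ^ 2 = 2 * (vnormA A x ^ 2 + vnormA A y ^ 2) := by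
  simp only [vnormA_sq hA, innA_add_left, innA_add_right, innA_sub_left, innA_sub_right,
    Complex.add_re, Complex.sub_re]
  ring

lemma le_mul_vnormA_pow {f : H → ℝ} {n : ℕ} {C : ℝ} (hC : 0 ≤ C)
    (hf : ∀ (c : ℂ) (x : H), f (c • x) = ‖c‖ ^ n * f x)
    (h0 : ∀ x, vnormA A x = 0 → f x ≤ 0) (h1 : ∀ x, vnormA A x = 1 → f x ≤ C) (x : H) :
    f x ≤ C * vnormA A x ^ n := by
  rcases (vnormA_nonneg (A := A) x).eq_or_lt with hx | hx
  · exact (h0 x hx.symm).trans (by positivity)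
  have hnorm : ‖(vnormA A x : ℂ)⁻¹‖ = (vnormA A x)⁻¹ := by
    rw [norm_inv, Complex.norm_real, Real.norm_of_nonneg hx.le]
  have hunit : vnormA A ((vnormA A x : ℂ)⁻¹ • x) = 1 := by
    rw [vnormA_smul, hnorm, inv_mul_cancel₀ hx.ne']
  have := h1 _ hunit
  rw [hf, hnorm, inv_pow, inv_mul_le_iff₀ (by positivity)] at this
  linarith

end InnerA

lemma isAAdjoint_iff : IsAAdjoint A V W ↔ ∀ x y, innA A (W x) y = innA A x (V y) := by
  constructor
  · intro h x y
    rw [innA, innA, ← adjoint_inner_left, ← ContinuousLinearMap.comp_apply, h,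
      ContinuousLinearMap.comp_apply]
  · intro h
    ext x
    exact ext_inner_right ℂ fun y => by rw [ContinuousLinearMap.comp_apply,
      ContinuousLinearMap.comp_apply, adjoint_inner_left, ← innA, ← innA, h]

lemma StrictPos.injective (hA : StrictPos A) : Function.Injective A := by
  refine (injective_iff_map_eq_zero A).2 fun x hx => ?_
  by_contra hx0
  simpa [innA, hx] using hA.2 x hx0

namespace IsAAdjoint

variable {V' W' : H →L[ℂ] H}

lemma innA_apply (h : IsAAdjoint A V W) (x y : H) : innA A (W x) y = innA A x (V y) :=
  isAAdjoint_iff.1 h x y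

lemma symm (hA : IsSelfAdjoint A) (h : IsAAdjoint A V W) : IsAAdjoint A W V :=
  isAAdjoint_iff.2 fun x y => by
    rw [← innA_conj hA y, ← h.innA_apply, innA_conj hA]

lemma mul (h : IsAAdjoint A V W) (h' : IsAAdjoint A V' W') : IsAAdjoint A (V * V') (W' * W) :=
  isAAdjoint_iff.2 fun x y => by
    rw [mul_apply_eq_comp, mul_apply_eq_comp, h'.innA_apply, h.innA_apply]

lemma add (h : IsAAdjoint A V W) (h' : IsAAdjoint A V' W') : IsAAdjoint A (V + V') (W + W') :=
  isAAdjoint_iff.2 fun x y => by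
    simp only [_root_.add_apply, innA_add_left, innA_add_right, h.innA_apply, h'.innA_apply]

lemma smul (h : IsAAdjoint A V W) (c : ℂ) : IsAAdjoint A (c • V) (conj c • W) :=
  isAAdjoint_iff.2 fun x y => by
    simp only [_root_.smul_apply, innA_smul_left, innA_smul_right, h.innA_apply,
      Complex.conj_conj]

lemma pow (h : IsAAdjoint A V W) (n : ℕ) : IsAAdjoint A (V ^ n) (W ^ n) := by
  induction n with
  | zero => exact isAAdjoint_iff.2 fun x y => rfl
  | succ n ih => rw [pow_succ V, pow_succ' W]; exact ih.mul h

lemma pow_eq_zero_of_injective (hA : Function.Injective A) (h : IsAAdjoint A V W) {n : ℕ}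
    (hV : V ^ n = 0) : W ^ n = 0 := by
  have h0 : IsAAdjoint A 0 (W ^ n) := hV ▸ h.pow n
  ext x
  refine hA (ext_inner_right ℂ fun y => ?_)
  simpa [innA] using h0.innA_apply x y

lemma smul_add_conj_smul (hA : IsSelfAdjoint A) (h : IsAAdjoint A V W) (c : ℂ) :
    IsAAdjoint A (c • V + conj c • W) (c • V + conj c • W) := by
  simpa [add_comm] using (h.smul c).add ((h.symm hA).smul (conj c))

lemma cubic (hA : IsSelfAdjoint A) (h : IsAAdjoint A V W) :
    IsAAdjoint A (V ^ 2 * W + W * V ^ 2 + V * W * V) (W ^ 2 * V + V * W ^ 2 + W * V * W) := by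
  have h' := h.symm hA
  convert ((h.pow 2).mul h').add ((h'.mul (h.pow 2)).add ((h.mul h').mul h)) using 1
  · rw [add_assoc]
  · rw [mul_assoc]; abel

lemma innA_smul_add_conj_smul (hA : IsSelfAdjoint A) (h : IsAAdjoint A V W) (c : ℂ) (x : H) :
    innA A ((c • V + conj c • W) x) x
      = conj c * innA A (V x) x + c * conj (innA A (V x) x) := by
  simp only [_root_.add_apply, _root_.smul_apply, innA_add_left,
    innA_smul_left, Complex.conj_conj, h.innA_apply, innA_conj hA]

end IsAAdjoint

lemma le_of_forall_pow_two_pow_le_mul_pow {b m C : ℝ} (hm : 0 ≤ m)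
    (h : ∀ k : ℕ, b ^ 2 ^ k ≤ C * m ^ 2 ^ k) : b ≤ m := by
  by_contra! hlt
  have hb : 0 < b := hm.trans_lt hlt
  have hlim : Filter.Tendsto (fun k : ℕ => C * (m / b) ^ 2 ^ k) Filter.atTop (nhds 0) := by
    simpa using ((tendsto_pow_atTop_nhds_zero_of_lt_one (div_nonneg hm hb.le)
      ((div_lt_one hb).2 hlt)).comp
        (tendsto_pow_atTop_atTop_of_one_lt (α := ℕ) one_lt_two)).const_mul C
  obtain ⟨k, hk⟩ := (hlim.eventually (gt_mem_nhds zero_lt_one)).exists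
  rw [div_pow, mul_div_assoc', div_lt_one (by positivity)] at hk
  linarith [h k]

section Bounds

variable {M : H →L[ℂ] H}

namespace IsAAdjoint

lemma vnormA_apply_sq_le (hA : A.IsPositive) (h : IsAAdjoint A V W) (x : H) :
    vnormA A (V x) ^ 2 ≤ vnormA A (W (V x)) * vnormA A x := by
  rw [vnormA_sq hA, ← h.innA_apply]
  exact (Complex.re_le_norm _).trans (norm_innA_le hA _ _)

lemma vnormA_apply_eq_zero (hA : A.IsPositive) (h : IsAAdjoint A V W) {x : H}
    (hx : vnormA A x = 0) : vnormA A (V x) = 0 := by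
  have := h.vnormA_apply_sq_le hA x
  rw [hx, mul_zero] at this
  exact pow_eq_zero_iff two_ne_zero |>.1 (le_antisymm this (sq_nonneg _))

/-- The power trick: `‖M x‖_A ^ (2 ^ k) ≤ ‖M ^ (2 ^ k) x‖_A` for `‖x‖_A = 1`, and the right
side grows at most like `‖M‖ ^ (2 ^ k)`. -/
lemma vnormA_apply_le_norm_mul (hA : A.IsPositive) (hM : IsAAdjoint A M M) (x : H) :
    vnormA A (M x) ≤ ‖M‖ * vnormA A x := by
  have hunit : ∀ x, vnormA A x = 1 → vnormA A (M x) ≤ ‖M‖ := by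
    intro x hx
    have hpow (k : ℕ) : vnormA A (M x) ^ 2 ^ k ≤ vnormA A ((M ^ 2 ^ k) x) := by
      induction k with
      | zero => simp
      | succ k ih =>
        calc vnormA A (M x) ^ 2 ^ (k + 1) = (vnormA A (M x) ^ 2 ^ k) ^ 2 := by ring
          _ ≤ vnormA A ((M ^ 2 ^ k) x) ^ 2 := by gcongr; exact pow_nonneg (vnormA_nonneg _) _
          _ ≤ vnormA A ((M ^ 2 ^ k) ((M ^ 2 ^ k) x)) * vnormA A x :=
            (hM.pow _).vnormA_apply_sq_le hA x
          _ = vnormA A ((M ^ 2 ^ (k + 1)) x) := by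
            rw [hx, mul_one, ← mul_apply_eq_comp, ← pow_add, ← two_mul, pow_succ']
    refine le_of_forall_pow_two_pow_le_mul_pow (norm_nonneg M) (C := √‖A‖ * ‖x‖) fun k => ?_
    calc vnormA A (M x) ^ 2 ^ k ≤ vnormA A ((M ^ 2 ^ k) x) := hpow k
      _ ≤ √‖A‖ * ‖(M ^ 2 ^ k) x‖ := vnormA_le _
      _ ≤ √‖A‖ * (‖M‖ ^ 2 ^ k * ‖x‖) := by
        gcongr
        exact ((M ^ 2 ^ k).le_opNorm x).trans (by gcongr; exact norm_pow_le' M (by positivity))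
      _ = √‖A‖ * ‖x‖ * ‖M‖ ^ 2 ^ k := by ring
  simpa using le_mul_vnormA_pow (A := A) (f := fun x => vnormA A (M x)) (n := 1)
    (norm_nonneg M) (fun c x => by simp [vnormA_smul])
    (fun x hx => (hM.vnormA_apply_eq_zero hA hx).le) hunit x

lemma vnormA_apply_le (hA : A.IsPositive) (h : IsAAdjoint A V W) (x : H) :
    vnormA A (V x) ≤ √‖W * V‖ * vnormA A x := by
  have hWV : IsAAdjoint A (W * V) (W * V) := (h.symm hA.isSelfAdjoint).mul h
  refine le_of_pow_le_pow_left₀ two_ne_zero (mul_nonneg (Real.sqrt_nonneg _) (vnormA_nonneg x)) ?_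
  calc vnormA A (V x) ^ 2 ≤ vnormA A ((W * V) x) * vnormA A x := h.vnormA_apply_sq_le hA x
    _ ≤ ‖W * V‖ * vnormA A x * vnormA A x := by
      gcongr
      · exact vnormA_nonneg x
      · exact hWV.vnormA_apply_le_norm_mul hA x
    _ = (√‖W * V‖ * vnormA A x) ^ 2 := by
      rw [mul_pow, Real.sq_sqrt (norm_nonneg _)]; ring

end IsAAdjoint

end Bounds

section Radius

variable {M V' W' : H →L[ℂ] H}

lemma wA_nonneg (V : H →L[ℂ] H) : 0 ≤ wA A V :=
  Real.sSup_nonneg fun _ ⟨_, _, hr⟩ => hr ▸ norm_nonneg _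

lemma wA_le {C : ℝ} (hC : 0 ≤ C) (h : ∀ x, vnormA A x = 1 → ‖innA A (V x) x‖ ≤ C) :
    wA A V ≤ C :=
  Real.sSup_le (fun _ ⟨x, hx, hr⟩ => hr ▸ h x hx) hC

lemma wA_pow_le {n : ℕ} (hn : n ≠ 0) {C : ℝ} (hC : 0 ≤ C)
    (h : ∀ x, vnormA A x = 1 → ‖innA A (V x) x‖ ^ n ≤ C) : wA A V ^ n ≤ C := by
  have hroot : (C ^ (n⁻¹ : ℝ)) ^ n = C := Real.rpow_inv_natCast_pow hC hn
  rw [← hroot]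
  refine pow_le_pow_left₀ (wA_nonneg V) (wA_le (by positivity) fun x hx => ?_) n
  exact le_of_pow_le_pow_left₀ hn (by positivity) (by rw [hroot]; exact h x hx)

lemma opNormA'_nonneg (V : H →L[ℂ] H) : 0 ≤ opNormA' A V :=
  Real.sSup_nonneg fun _ ⟨_, _, hr⟩ => hr ▸ vnormA_nonneg _

lemma opNormA'_le {C : ℝ} (hC : 0 ≤ C) (h : ∀ x, vnormA A x = 1 → vnormA A (V x) ≤ C) :
    opNormA' A V ≤ C :=
  Real.sSup_le (fun _ ⟨x, hx, hr⟩ => hr ▸ h x hx) hC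

namespace IsAAdjoint

lemma vnormA_apply_le_opNormA' (hA : A.IsPositive) (h : IsAAdjoint A V W) {x : H}
    (hx : vnormA A x = 1) : vnormA A (V x) ≤ opNormA' A V := by
  refine le_csSup ⟨√‖W * V‖, ?_⟩ ⟨x, hx, rfl⟩
  rintro _ ⟨y, hy, rfl⟩
  simpa [hy] using h.vnormA_apply_le hA y

lemma vnormA_apply_le_opNormA'_mul (hA : A.IsPositive) (h : IsAAdjoint A V W) (x : H) :
    vnormA A (V x) ≤ opNormA' A V * vnormA A x := by
  simpa using le_mul_vnormA_pow (A := A) (f := fun x => vnormA A (V x)) (n := 1)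
    (opNormA'_nonneg V) (fun c x => by simp [vnormA_smul])
    (fun x hx => (h.vnormA_apply_eq_zero hA hx).le) (fun x hx => h.vnormA_apply_le_opNormA' hA hx) x

lemma norm_innA_le_wA (hA : A.IsPositive) (h : IsAAdjoint A V W) {x : H}
    (hx : vnormA A x = 1) : ‖innA A (V x) x‖ ≤ wA A V := by
  refine le_csSup ⟨opNormA' A V, ?_⟩ ⟨x, hx, rfl⟩
  rintro _ ⟨y, hy, rfl⟩
  simpa [hy] using (norm_innA_le hA _ _).trans
    (mul_le_mul_of_nonneg_right (h.vnormA_apply_le_opNormA' hA hy) (vnormA_nonneg y))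

lemma norm_innA_le_wA_mul_sq (hA : A.IsPositive) (h : IsAAdjoint A V W) (x : H) :
    ‖innA A (V x) x‖ ≤ wA A V * vnormA A x ^ 2 :=
  le_mul_vnormA_pow (A := A) (f := fun x => ‖innA A (V x) x‖) (wA_nonneg V)
    (fun c x => by simp [innA_smul_left, innA_smul_right, ← mul_assoc, sq])
    (fun x hx => by simpa [hx] using norm_innA_le hA (V x) x)
    (fun x hx => h.norm_innA_le_wA hA hx) x

lemma wA_le_opNormA' (hA : A.IsPositive) (h : IsAAdjoint A V W) : wA A V ≤ opNormA' A V :=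
  wA_le (opNormA'_nonneg V) fun x hx => by
    simpa [hx] using (norm_innA_le hA _ _).trans
      (mul_le_mul_of_nonneg_right (h.vnormA_apply_le_opNormA' hA hx) (vnormA_nonneg x))

lemma four_mul_re_innA (hA : IsSelfAdjoint A) (hM : IsAAdjoint A M M) (x y : H) :
    4 * (innA A (M x) y).re
      = (innA A (M (x + y)) (x + y)).re - (innA A (M (x - y)) (x - y)).re := by
  have hyx : innA A (M y) x = conj (innA A (M x) y) := by
    rw [hM.innA_apply, innA_conj hA]
  simp only [map_add, map_sub, innA_add_left, innA_add_right, innA_sub_left, innA_sub_right, hyx,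
    Complex.add_re, Complex.sub_re, Complex.conj_re]
  ring

/-- Polarization, tested on `y = M x / ‖M x‖_A`. -/
lemma opNormA'_le_wA (hA : A.IsPositive) (hM : IsAAdjoint A M M) : opNormA' A M ≤ wA A M := by
  refine opNormA'_le (wA_nonneg M) fun x hx => ?_
  rcases (vnormA_nonneg (A := A) (M x)).eq_or_lt with ht | ht
  · rw [← ht]; exact wA_nonneg M
  set y := (vnormA A (M x) : ℂ)⁻¹ • M x
  have hy : vnormA A y = 1 := by
    rw [vnormA_smul, norm_inv, Complex.norm_real, Real.norm_of_nonneg ht.le,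
      inv_mul_cancel₀ ht.ne']
  have hre : (innA A (M x) y).re = vnormA A (M x) := by
    rw [innA_smul_right, ← Complex.ofReal_inv, Complex.re_ofReal_mul, ← vnormA_sq hA]
    field_simp
  have hpolar := hM.four_mul_re_innA hA.isSelfAdjoint x y
  have hsum := (Complex.re_le_norm _).trans (hM.norm_innA_le_wA_mul_sq hA (x + y))
  have hdiff := ((neg_le_abs _).trans (Complex.abs_re_le_norm _)).trans
    (hM.norm_innA_le_wA_mul_sq hA (x - y))
  have hpar := vnormA_parallelogram hA x y
  rw [hx, hy] at hpar
  nlinarith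

lemma wA_eq_opNormA' (hA : A.IsPositive) (hM : IsAAdjoint A M M) : wA A M = opNormA' A M :=
  (hM.wA_le_opNormA' hA).antisymm (hM.opNormA'_le_wA hA)

lemma opNormA'_mul_le (hA : A.IsPositive) (h : IsAAdjoint A V W) (h' : IsAAdjoint A V' W') :
    opNormA' A (V * V') ≤ opNormA' A V * opNormA' A V' :=
  opNormA'_le (mul_nonneg (opNormA'_nonneg V) (opNormA'_nonneg V')) fun x hx =>
    calc vnormA A (V (V' x)) ≤ opNormA' A V * vnormA A (V' x) :=
          h.vnormA_apply_le_opNormA'_mul hA _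
      _ ≤ opNormA' A V * opNormA' A V' := by
        gcongr
        · exact opNormA'_nonneg V
        · exact h'.vnormA_apply_le_opNormA' hA hx

lemma opNormA'_mul_self (hA : A.IsPositive) (hM : IsAAdjoint A M M) :
    opNormA' A (M * M) = opNormA' A M ^ 2 := by
  refine (sq (opNormA' A M) ▸ hM.opNormA'_mul_le hA hM).antisymm ?_
  have hle : opNormA' A M ≤ √(opNormA' A (M * M)) :=
    opNormA'_le (Real.sqrt_nonneg _) fun x hx => by
      refine Real.le_sqrt_of_sq_le ((hM.vnormA_apply_sq_le hA x).trans ?_)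
      simpa [hx] using (hM.mul hM).vnormA_apply_le_opNormA' hA hx
  simpa [Real.sq_sqrt (opNormA'_nonneg _)] using pow_le_pow_left₀ (opNormA'_nonneg M) hle 2

/-- `‖M‖_A ^ 4 = ‖M ^ 4‖_A ≤ ‖M ^ 3‖_A ‖M‖_A` gives the lower bound. -/
lemma opNormA'_pow_three (hA : A.IsPositive) (hM : IsAAdjoint A M M) :
    opNormA' A (M ^ 3) = opNormA' A M ^ 3 := by
  have hup : opNormA' A (M ^ 3) ≤ opNormA' A M ^ 3 := by
    calc opNormA' A (M ^ 3) = opNormA' A (M * (M * M)) := by rw [pow_succ', sq]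
      _ ≤ opNormA' A M * opNormA' A (M * M) := hM.opNormA'_mul_le hA (hM.mul hM)
      _ = opNormA' A M ^ 3 := by rw [hM.opNormA'_mul_self hA]; ring
  rcases (opNormA'_nonneg (A := A) M).eq_or_lt with h0 | hpos
  · rw [← h0, zero_pow three_ne_zero] at hup ⊢
    exact hup.antisymm (opNormA'_nonneg _)
  refine hup.antisymm (le_of_mul_le_mul_right ?_ hpos)
  calc opNormA' A M ^ 3 * opNormA' A M = opNormA' A (M * M * (M * M)) := by
        rw [(hM.mul hM).opNormA'_mul_self hA, hM.opNormA'_mul_self hA]; ring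
    _ = opNormA' A (M ^ 3 * M) := by simp only [pow_succ, pow_zero, one_mul, mul_assoc]
    _ ≤ opNormA' A (M ^ 3) * opNormA' A M := (hM.pow 3).opNormA'_mul_le hA hM

lemma wA_pow_three (hA : A.IsPositive) (hM : IsAAdjoint A M M) :
    wA A (M ^ 3) = wA A M ^ 3 := by
  rw [(hM.pow 3).wA_eq_opNormA' hA, hM.wA_eq_opNormA' hA, hM.opNormA'_pow_three hA]

end IsAAdjoint

end Radius

theorem smul_add_conj_smul_pow_three {R : Type*} [Ring R] [Algebra ℂ R] {a b : R}
    (ha : a ^ 3 = 0) (hb : b ^ 3 = 0) {c : ℂ} (hc : ‖c‖ = 1) :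
    (c • a + conj c • b) ^ 3 =
      c • (a ^ 2 * b + b * a ^ 2 + a * b * a)
        + conj c • (b ^ 2 * a + a * b ^ 2 + b * a * b) := by
  have hcc : conj c * c = 1 := by
    rw [← Complex.normSq_eq_conj_mul_self, Complex.normSq_eq_norm_sq, hc]; norm_num
  have h₁ : c * c * conj c = c := by linear_combination c * hcc
  have h₂ : c * conj c * conj c = conj c := by linear_combination conj c * hcc
  have h₃ : c * conj c * c = c := by linear_combination c * hcc
  have h₄ : conj c * c * conj c = conj c := by linear_combination conj c * hcc
  have h₅ : conj c * c * c = c := by linear_combination c * hcc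
  have h₆ : conj c * conj c * c = conj c := by linear_combination conj c * hcc
  simp only [pow_succ, pow_zero, one_mul, mul_add, add_mul, smul_mul_smul_comm, ← mul_assoc]
    at ha hb ⊢
  simp only [ha, hb, smul_zero, h₁, h₂, h₃, h₄, h₅, h₆, smul_add]
  abel

lemma Complex.exists_norm_eq_one_conj_mul (z : ℂ) : ∃ c : ℂ, ‖c‖ = 1 ∧ conj c * z = ‖z‖ := by
  have hc := norm_exp_ofReal_mul_I z.arg
  refine ⟨_, hc, ?_⟩
  calc _ = conj (exp (z.arg * I)) * (‖z‖ * exp (z.arg * I)) := by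
        rw [norm_mul_exp_arg_mul_I]
    _ = ‖z‖ := by
        rw [mul_left_comm, ← Complex.normSq_eq_conj_mul_self, Complex.normSq_eq_norm_sq, hc]
        simp

namespace IsAAdjoint

variable {P Q : H →L[ℂ] H}

lemma wA_smul_add_conj_smul_le (hA : A.IsPositive) (h : IsAAdjoint A V W) {c : ℂ}
    (hc : ‖c‖ = 1) : wA A (c • V + conj c • W) ≤ 2 * wA A V :=
  wA_le (mul_nonneg zero_le_two (wA_nonneg V)) fun x hx => by
    rw [h.innA_smul_add_conj_smul hA.isSelfAdjoint]
    calc _ ≤ ‖innA A (V x) x‖ + ‖innA A (V x) x‖ := (norm_add_le _ _).trans (by simp [hc])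
      _ ≤ 2 * wA A V := by linarith [h.norm_innA_le_wA hA hx]

lemma exists_two_mul_norm_innA_le_wA (hA : A.IsPositive) (h : IsAAdjoint A V W) {x : H}
    (hx : vnormA A x = 1) :
    ∃ c : ℂ, ‖c‖ = 1 ∧ 2 * ‖innA A (V x) x‖ ≤ wA A (c • V + conj c • W) := by
  obtain ⟨c, hc, hcz⟩ := Complex.exists_norm_eq_one_conj_mul (innA A (V x) x)
  have hcz' : c * conj (innA A (V x) x) = ‖innA A (V x) x‖ := by
    simpa using congr(conj $hcz)
  refine ⟨c, hc, ?_⟩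
  calc 2 * ‖innA A (V x) x‖ = ‖innA A ((c • V + conj c • W) x) x‖ := by
        rw [h.innA_smul_add_conj_smul hA.isSelfAdjoint, hcz, hcz', ← two_mul]
        simp
    _ ≤ wA A (c • V + conj c • W) :=
        (h.smul_add_conj_smul hA.isSelfAdjoint c).norm_innA_le_wA hA hx

lemma four_mul_wA_pow_three_le (hA : A.IsPositive) (h : IsAAdjoint A V W)
    (hPQ : IsAAdjoint A P Q)
    (hcube : ∀ c : ℂ, ‖c‖ = 1 → (c • V + conj c • W) ^ 3 = c • P + conj c • Q) :
    4 * wA A V ^ 3 ≤ wA A P := by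
  suffices wA A V ^ 3 ≤ wA A P / 4 by linarith
  refine wA_pow_le three_ne_zero (by linarith [wA_nonneg (A := A) P]) fun x hx => ?_
  obtain ⟨c, hc, hle⟩ := h.exists_two_mul_norm_innA_le_wA hA hx
  have := calc (2 * ‖innA A (V x) x‖) ^ 3 ≤ wA A (c • V + conj c • W) ^ 3 := by gcongr
    _ = wA A (c • P + conj c • Q) := by
      rw [← (h.smul_add_conj_smul hA.isSelfAdjoint c).wA_pow_three hA, hcube c hc]
    _ ≤ 2 * wA A P := hPQ.wA_smul_add_conj_smul_le hA hc
  linarith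

lemma wA_le_four_mul_wA_pow_three (hA : A.IsPositive) (h : IsAAdjoint A V W)
    (hPQ : IsAAdjoint A P Q)
    (hcube : ∀ c : ℂ, ‖c‖ = 1 → (c • V + conj c • W) ^ 3 = c • P + conj c • Q) :
    wA A P ≤ 4 * wA A V ^ 3 := by
  refine wA_le (by have := wA_nonneg (A := A) V; positivity) fun x hx => ?_
  obtain ⟨c, hc, hle⟩ := hPQ.exists_two_mul_norm_innA_le_wA hA hx
  have := calc 2 * ‖innA A (P x) x‖ ≤ wA A (c • P + conj c • Q) := hle
    _ = wA A (c • V + conj c • W) ^ 3 := by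
      rw [← hcube c hc, (h.smul_add_conj_smul hA.isSelfAdjoint c).wA_pow_three hA]
    _ ≤ (2 * wA A V) ^ 3 := by
      gcongr
      exacts [wA_nonneg _, h.wA_smul_add_conj_smul_le hA hc]
  linarith

end IsAAdjoint

theorem stmt15 (A T S : H →L[ℂ] H) (hA : StrictPos A) (hS : IsAAdjoint A T S)
    (hT3 : T^3 = 0) :
    (wA A T)^3 = (1/4) * wA A (T^2 * S + S * T^2 + T * S * T) := by
  have hS3 : S ^ 3 = 0 := hS.pow_eq_zero_of_injective hA.injective hT3
  have hPQ := hS.cubic hA.1.isSelfAdjoint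
  have hcube (c : ℂ) (hc : ‖c‖ = 1) := smul_add_conj_smul_pow_three hT3 hS3 hc
  linarith [hS.four_mul_wA_pow_three_le hA.1 hPQ hcube,
    hS.wA_le_four_mul_wA_pow_three hA.1 hPQ hcube]
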